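/- arXiv:2207.05585 — 4 statements merged into one kernel-verified Lean document; each statement's English description precedes it below -/
import Mathlib

section
/- Let r ≥ 5 and p > 3 be primes, let d be an odd positive integer, and let a, b, c be integers with gcd(a,b) = 1 and a^r + b^r = d c^p. If 2 divides a+b, then the 2-adic valuation of a+b equals p times the 2-adic valuation of c; in particular v₂(a+b) ≥ p ≥ 5, so 8 divides a+b. -/
/-!
Since `a + b` is even and `a, b` are coprime, both are odd, and `r` is odd. Writing
`a ^ r + b ^ r = (a + b) · ∑ aⁱ (-b)^(r-1-i)`, the second factor is a sum of `r` odd terms, hence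
odd; so `v₂(a ^ r + b ^ r) = v₂(a + b)`. As `d` is odd, `v₂(d c ^ p) = p v₂(c)`. Finally `v₂(c) ≥ 1`
because `v₂(a + b) ≥ 1`, whence `v₂(a + b) ≥ p > 3`.
-/

theorem IsCoprime.not_dvd_left_of_dvd_add {R : Type*} [CommRing R] {a b q : R}
    (hab : IsCoprime a b) (hq : ¬IsUnit q) (h : q ∣ a + b) : ¬q ∣ a := fun ha =>
  hq (hab.isUnit_of_dvd' ha ((dvd_add_right ha).mp h))

theorem emultiplicity_pow_add_pow_of_prime {R : Type*} [CommRing R] [IsDomain R] {q : R}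
    (hq : Prime q) {x y : R} (hxy : q ∣ x + y) (hx : ¬q ∣ x) {n : ℕ} (hn : ¬q ∣ n)
    (hn_odd : Odd n) : emultiplicity q (x ^ n + y ^ n) = emultiplicity q (x + y) := by
  simpa only [hn_odd.neg_pow, sub_neg_eq_add] using
    emultiplicity_pow_sub_pow_of_prime hq (y := -y) (by rwa [sub_neg_eq_add]) hx hn

theorem Int.not_two_dvd_of_odd {n : ℤ} (hn : Odd n) : ¬(2 : ℤ) ∣ n := fun h =>
  Int.not_even_iff_odd.mpr hn (even_iff_two_dvd.mpr h)

theorem stmt_9_general (r p : ℕ) (hr : r.Prime) (hr5 : 5 ≤ r) (hp3 : 3 < p)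
    (d : ℕ) (hdodd : Odd d)
    (a b c : ℤ) (hab : IsCoprime a b) (heq : a ^ r + b ^ r = (d : ℤ) * c ^ p)
    (h2 : (2 : ℤ) ∣ a + b) :
    emultiplicity (2 : ℤ) (a + b) = (p : ℕ∞) * emultiplicity (2 : ℤ) c ∧
      (p : ℕ∞) ≤ emultiplicity (2 : ℤ) (a + b) ∧ (8 : ℤ) ∣ a + b := by
  have hr_odd : Odd r := hr.odd_of_ne_two (by omega)
  have hv : emultiplicity (2 : ℤ) (a + b) = p * emultiplicity (2 : ℤ) c := by
    rw [← emultiplicity_pow_add_pow_of_prime Int.prime_two h2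
        (hab.not_dvd_left_of_dvd_add Int.prime_two.not_isUnit h2)
        (Int.not_two_dvd_of_odd (by exact_mod_cast hr_odd)) hr_odd,
      heq, emultiplicity_mul Int.prime_two,
      emultiplicity_eq_zero.mpr (Int.not_two_dvd_of_odd (by exact_mod_cast hdodd)), zero_add,
      emultiplicity_pow Int.prime_two]
  have hp_le : (p : ℕ∞) ≤ emultiplicity (2 : ℤ) (a + b) := by
    have hc : emultiplicity (2 : ℤ) c ≠ 0 := by
      intro hc
      simpa [hv, hc] using emultiplicity_pos_of_dvd h2
    rw [hv]
    exact le_mul_of_one_le_right' (Order.one_le_iff_ne_zero.mpr hc)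
  refine ⟨hv, hp_le, ?_⟩
  simpa using pow_dvd_of_le_emultiplicity (k := 3) ((Nat.cast_le.mpr hp3.le).trans hp_le)

/-- Let `r ≥ 5` and `p > 3` be primes, `d` an odd positive integer, and `a, b, c`
integers with `gcd(a,b) = 1` and `a^r + b^r = d c^p`. If `2 ∣ a + b`, then
`v₂(a+b) = p · v₂(c)`; in particular `v₂(a+b) ≥ p ≥ 5`, so `8 ∣ a + b`. -/
theorem stmt_9 (r p : ℕ) (hr : r.Prime) (hr5 : 5 ≤ r) (hp : p.Prime) (hp3 : 3 < p)
    (d : ℕ) (hd0 : 0 < d) (hdodd : Odd d)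
    (a b c : ℤ) (hab : IsCoprime a b) (heq : a ^ r + b ^ r = (d : ℤ) * c ^ p)
    (h2 : (2 : ℤ) ∣ a + b) :
    emultiplicity (2 : ℤ) (a + b) = (p : ℕ∞) * emultiplicity (2 : ℤ) c ∧
      (p : ℕ∞) ≤ emultiplicity (2 : ℤ) (a + b) ∧ (8 : ℤ) ∣ a + b :=
  stmt_9_general r p hr hr5 hp3 d hdodd a b c hab heq h2
end

section
/- Let r ≥ 5 be a prime and let ζ be a primitive r-th root of unity in the cyclotomic field ℚ(ζ_r). Let a, b be coprime integers with a ≡ −b (mod 4). Then for every prime ideal q of ℤ[ζ] lying above 2, the image of B_{a,b} = β f₁(a,b) in ℤ[ζ]/q² is a square; explicitly, writing z = −ζ − ζ⁻¹, one has B_{a,b} ≡ ( b(z+2)(ζ^{(r+1)/2} + ζ^{−(r+1)/2}) )² (mod q²). -/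
open NumberField

/-! Write `β = (1 - ζ)(1 - ζ⁻¹) = z + 2` and let `w = ζ^{(r+1)/2}`, a square root of `ζ` with
`(w + w⁻¹)² = 2 - z`. At `a = -b` one has `f₁(-b, b) = b² (4 - z²)`, so `B_{-b,b}` is exactly the
square `(b (z + 2)(w + w⁻¹))²`. Moreover `B_{a,b} - B_{-b,b} = β (a + b)(a - b + (ζ² + ζ⁻²) b)`,
where `a + b`, being divisible by `4`, lies in `q²` because `2 ∈ q`. -/

section CommRing

variable {R : Type*} [CommRing R]

theorem Ideal.intCast_mem_sq_of_four_dvd {I : Ideal R} (h2 : (2 : R) ∈ I) {n : ℤ}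
    (hn : 4 ∣ n) : (n : R) ∈ I ^ 2 := by
  obtain ⟨k, rfl⟩ := hn
  have h4 : (4 : R) ∈ I ^ 2 := by
    rw [pow_two, show (4 : R) = 2 * 2 by norm_num]
    exact Ideal.mul_mem_mul h2 h2
  simpa using Ideal.mul_mem_right (k : R) _ h4

theorem beta_mul_form_neg_eq_sq {x y u v : R} (hxy : x * y = 1) (huv : u * v = 1)
    (hux : u ^ 2 = x) (hvy : v ^ 2 = y) (b : R) :
    (1 - x) * (1 - y) * ((-b) ^ 2 + (x ^ 2 + y ^ 2) * (-b) * b + b ^ 2) =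
      (b * ((-x - y) + 2) * (u + v)) ^ 2 := by
  linear_combination
    b ^ 2 * ((2 - x - y) * (4 + x + y) + 2 * (x * y - 1)) * hxy
      - b ^ 2 * (2 - x - y) ^ 2 * (2 * huv + hux + hvy)

theorem beta_mul_form_sub_sq_mem {I : Ideal R} (h2 : (2 : R) ∈ I) {x y u v : R}
    (hxy : x * y = 1) (huv : u * v = 1) (hux : u ^ 2 = x) (hvy : v ^ 2 = y)
    {a b : ℤ} (h4 : a ≡ -b [ZMOD 4]) :
    (1 - x) * (1 - y) * ((a : R) ^ 2 + (x ^ 2 + y ^ 2) * a * b + (b : R) ^ 2) -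
      (b * ((-x - y) + 2) * (u + v)) ^ 2 ∈ I ^ 2 := by
  have hab : ((a + b : ℤ) : R) ∈ I ^ 2 :=
    Ideal.intCast_mem_sq_of_four_dvd h2 (by simpa using h4.symm.dvd)
  have hdiff : (1 - x) * (1 - y) * ((a : R) ^ 2 + (x ^ 2 + y ^ 2) * a * b + (b : R) ^ 2) -
      (b * ((-x - y) + 2) * (u + v)) ^ 2 =
      ((a + b : ℤ) : R) * ((1 - x) * (1 - y) * (a - b + (x ^ 2 + y ^ 2) * b)) := by
    rw [← beta_mul_form_neg_eq_sq hxy huv hux hvy]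
    push_cast
    ring
  exact hdiff ▸ Ideal.mul_mem_right _ _ hab

end CommRing

theorem stmt_12_general (r : ℕ) (hr : r.Prime) (hr5 : 5 ≤ r)
    (K : Type*) [Field K]
    (ζ : 𝓞 K) (hζ : IsPrimitiveRoot ζ r)
    (a b : ℤ) (h4 : a ≡ -b [ZMOD 4])
    (q : Ideal (𝓞 K)) (hq2 : (2 : 𝓞 K) ∈ q) :
    (∃ s : 𝓞 K,
      (1 - ζ) * (1 - ζ ^ (r - 1)) *
          ((a : 𝓞 K) ^ 2 + (ζ ^ 2 + ζ ^ (r - 2)) * (a : 𝓞 K) * (b : 𝓞 K) +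
            (b : 𝓞 K) ^ 2) - s ^ 2 ∈ q ^ 2) ∧
    (1 - ζ) * (1 - ζ ^ (r - 1)) *
        ((a : 𝓞 K) ^ 2 + (ζ ^ 2 + ζ ^ (r - 2)) * (a : 𝓞 K) * (b : 𝓞 K) +
          (b : 𝓞 K) ^ 2) -
      ((b : 𝓞 K) * ((-ζ - ζ ^ (r - 1)) + 2) *
        (ζ ^ ((r + 1) / 2) + ζ ^ ((r - 1) / 2))) ^ 2 ∈ q ^ 2 := by
  obtain ⟨n, rfl⟩ : ∃ n, r = 2 * n + 3 := by
    obtain ⟨m, hm⟩ := hr.odd_of_ne_two (by omega)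
    exact ⟨m - 1, by omega⟩
  rw [show (2 * n + 3 + 1) / 2 = n + 2 by omega, show (2 * n + 3 - 1) / 2 = n + 1 by omega,
    show 2 * n + 3 - 1 = 2 * n + 2 by omega, show 2 * n + 3 - 2 = 2 * n + 1 by omega]
  have hone : ζ ^ (2 * n + 3) = 1 := hζ.pow_eq_one
  have hmem := beta_mul_form_sub_sq_mem hq2 (x := ζ) (y := ζ ^ (2 * n + 2))
    (u := ζ ^ (n + 2)) (v := ζ ^ (n + 1)) (by linear_combination hone)
    (by linear_combination hone) (by linear_combination ζ * hone) (by ring) h4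
  rw [show (ζ ^ (2 * n + 2)) ^ 2 = ζ ^ (2 * n + 1) by linear_combination ζ ^ (2 * n + 1) * hone]
    at hmem
  exact ⟨⟨_, hmem⟩, hmem⟩

/-- Let `r ≥ 5` be a prime and `ζ` a primitive `r`-th root of unity in the ring of
integers `ℤ[ζ]` of `ℚ(ζ_r)`. Let `a, b` be coprime integers with `a ≡ −b (mod 4)`.
Then for every prime ideal `q` of `ℤ[ζ]` lying above `2`, the image of
`B_{a,b} = β f₁(a,b)` in `ℤ[ζ]/q²` is a square; explicitly, with `z = −ζ − ζ⁻¹`,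
`B_{a,b} ≡ (b(z+2)(ζ^{(r+1)/2} + ζ^{−(r+1)/2}))² (mod q²)`
(here `ζ⁻¹ = ζ^{r−1}`, `ζ⁻² = ζ^{r−2}`, `ζ^{−(r+1)/2} = ζ^{(r−1)/2}` in `ℤ[ζ]`). -/
theorem stmt_12 (r : ℕ) (hr : r.Prime) (hr5 : 5 ≤ r)
    (K : Type*) [Field K] [CharZero K]
    [IsCyclotomicExtension {r} ℚ K]
    (ζ : 𝓞 K) (hζ : IsPrimitiveRoot ζ r)
    (a b : ℤ) (hab : IsCoprime a b) (h4 : a ≡ -b [ZMOD 4])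
    (q : Ideal (𝓞 K)) (hq : q.IsPrime) (hq2 : (2 : 𝓞 K) ∈ q) :
    (∃ s : 𝓞 K,
      (1 - ζ) * (1 - ζ ^ (r - 1)) *
          ((a : 𝓞 K) ^ 2 + (ζ ^ 2 + ζ ^ (r - 2)) * (a : 𝓞 K) * (b : 𝓞 K) +
            (b : 𝓞 K) ^ 2) - s ^ 2 ∈ q ^ 2) ∧
    (1 - ζ) * (1 - ζ ^ (r - 1)) *
        ((a : 𝓞 K) ^ 2 + (ζ ^ 2 + ζ ^ (r - 2)) * (a : 𝓞 K) * (b : 𝓞 K) +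
          (b : 𝓞 K) ^ 2) -
      ((b : 𝓞 K) * ((-ζ - ζ ^ (r - 1)) + 2) *
        (ζ ^ ((r + 1) / 2) + ζ ^ ((r - 1) / 2))) ^ 2 ∈ q ^ 2 :=
  stmt_12_general r hr hr5 K ζ hζ a b h4 q hq2
end

section
/- Let r ≥ 5 be a prime, let ζ be a primitive r-th root of unity in ℚ(ζ_r), and let λ = (1−ζ) be the prime ideal of ℤ[ζ] above r, with associated valuation v_λ (normalized so v_λ(1−ζ) = 1, hence v_λ(r) = r−1). Let a, b be coprime integers with r dividing a+b, and let F_{a,b} be the elliptic curve Y² = X(X − A_{a,b})(X + B_{a,b}). Then v_λ(c₄(F_{a,b})) = 8, v_λ(c₆(F_{a,b})) = 12, and v_λ(Δ(F_{a,b})) = 20 + 4(r−1)·v_r(a+b), where v_r(a+b) is the r-adic valuation of the integer a+b. (These values are twice the valuations at the prime of the maximal real subfield ℚ(ζ_r)⁺ above r, since that prime ramifies in ℚ(ζ_r) with ramification index 2.) -/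
/-!
Write `v` for the valuation at the prime `λ = 1 - ζ`. Since `λ ^ (r - 1) ~ r` and
`1 - ζ ^ k ~ λ` for `0 < k < r`, we get `v(α) = v(β) = v(γ) = 2` and
`v(a + b) = (r - 1) v_r(a + b) ≥ r - 1`. For `u u' = 1`,
`x² + (u + u')xy + y² = (x + y)(y - x + (u + u')x) + x²(1 - u)(1 - u')`, so `λ ∤ a` gives
`v(f₁(a, b)) = v(f₂(a, b)) = 2`. Hence `v(B) = v(C) = 4 < v(A) = 2 + 2 v(a + b)`, and the
ultrametric inequality yields `v(c₄) = 2 v(B)` and, as `λ ∤ 2`, `v(c₆) = 3 v(B)`.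
-/

open NumberField

/-- `α = ζ(1−ζ)(1−ζ⁻³)`, with `ζ⁻¹ = ζ^{r−1}` for `ζ` an `r`-th root of unity. -/
def freyAlpha {R : Type*} [CommRing R] (r : ℕ) (ζ : R) : R :=
  ζ * (1 - ζ) * (1 - ζ ^ (r - 3))

/-- `β = (1−ζ)(1−ζ⁻¹)`. -/
def freyBeta {R : Type*} [CommRing R] (r : ℕ) (ζ : R) : R :=
  (1 - ζ) * (1 - ζ ^ (r - 1))

/-- `γ = −(1−ζ²)(1−ζ⁻²)`. -/
def freyGamma {R : Type*} [CommRing R] (r : ℕ) (ζ : R) : R :=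
  -((1 - ζ ^ 2) * (1 - ζ ^ (r - 2)))

/-- `A_{a,b} = α(a+b)²`. -/
def freyA {R : Type*} [CommRing R] (r : ℕ) (ζ : R) (a b : ℤ) : R :=
  freyAlpha r ζ * ((a : R) + (b : R)) ^ 2

/-- `B_{a,b} = β f₁(a,b)` with `f₁(x,y) = x² + (ζ² + ζ⁻²)xy + y²`. -/
def freyB {R : Type*} [CommRing R] (r : ℕ) (ζ : R) (a b : ℤ) : R :=
  freyBeta r ζ * ((a : R) ^ 2 + (ζ ^ 2 + ζ ^ (r - 2)) * (a : R) * (b : R) + (b : R) ^ 2)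

/-- `C_{a,b} = γ f₂(a,b)` with `f₂(x,y) = x² + (ζ + ζ⁻¹)xy + y²`. -/
def freyC {R : Type*} [CommRing R] (r : ℕ) (ζ : R) (a b : ℤ) : R :=
  freyGamma r ζ * ((a : R) ^ 2 + (ζ + ζ ^ (r - 1)) * (a : R) * (b : R) + (b : R) ^ 2)

/-- `c₄ = 2⁴(A² + AB + B²)` for the Frey curve `Y² = X(X − A)(X + B)`. -/
def freyC4 {R : Type*} [CommRing R] (r : ℕ) (ζ : R) (a b : ℤ) : R :=
  2 ^ 4 * (freyA r ζ a b ^ 2 + freyA r ζ a b * freyB r ζ a b + freyB r ζ a b ^ 2)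

/-- `c₆ = 2⁵(2A³ + 3A²B − 3AB² − 2B³)`. -/
def freyC6 {R : Type*} [CommRing R] (r : ℕ) (ζ : R) (a b : ℤ) : R :=
  2 ^ 5 * (2 * freyA r ζ a b ^ 3 + 3 * freyA r ζ a b ^ 2 * freyB r ζ a b -
    3 * freyA r ζ a b * freyB r ζ a b ^ 2 - 2 * freyB r ζ a b ^ 3)

/-- `Δ = 2⁴(ABC)²`. -/
def freyDelta {R : Type*} [CommRing R] (r : ℕ) (ζ : R) (a b : ℤ) : R :=
  2 ^ 4 * (freyA r ζ a b * freyB r ζ a b * freyC r ζ a b) ^ 2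

theorem exists_emultiplicity_eq_and_pow_dvd_of_lt {M : Type*} [Monoid M] {π A B : M}
    (h : emultiplicity π B < emultiplicity π A) :
    ∃ n : ℕ, emultiplicity π B = n ∧ π ^ n ∣ B ∧ π ^ (n + 1) ∣ A := by
  obtain ⟨n, hn⟩ := ENat.ne_top_iff_exists.mp (ne_top_of_lt h)
  rw [← hn] at h
  exact ⟨n, hn.symm, pow_dvd_of_le_emultiplicity hn.le,
    pow_dvd_of_le_emultiplicity (Order.add_one_le_of_lt h)⟩

section Ultrametric

variable {R : Type*} [CommRing R] [IsDomain R] {π A B : R}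

theorem emultiplicity_sq_add_mul_add_sq_of_lt (hπ : Prime π)
    (h : emultiplicity π B < emultiplicity π A) :
    emultiplicity π (A ^ 2 + A * B + B ^ 2) = 2 * emultiplicity π B := by
  obtain ⟨n, hn, hB, hA⟩ := exists_emultiplicity_eq_and_pow_dvd_of_lt h
  have hlead : emultiplicity π (B ^ 2) = (2 * n : ℕ) := by
    rw [emultiplicity_pow hπ, hn]; norm_cast
  have hrest : π ^ (2 * n + 1) ∣ A * (A + B) := by
    obtain ⟨A', rfl⟩ := hA
    obtain ⟨B', rfl⟩ := hB
    exact Dvd.intro (A' * (π * A' + B')) (by ring)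
  have hgt : emultiplicity π (B ^ 2) < emultiplicity π (A * (A + B)) := by
    rw [hlead]
    exact (ENat.natCast_lt_natCast.mpr (2 * n).lt_succ_self).trans_le (le_emultiplicity_of_pow_dvd hrest)
  rw [show A ^ 2 + A * B + B ^ 2 = A * (A + B) + B ^ 2 by ring, emultiplicity_add_of_gt hgt,
    hlead, hn]
  norm_cast

theorem emultiplicity_cubic_of_lt (hπ : Prime π) (h2 : ¬π ∣ 2)
    (h : emultiplicity π B < emultiplicity π A) :
    emultiplicity π (2 * A ^ 3 + 3 * A ^ 2 * B - 3 * A * B ^ 2 - 2 * B ^ 3) =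
      3 * emultiplicity π B := by
  obtain ⟨n, hn, hB, hA⟩ := exists_emultiplicity_eq_and_pow_dvd_of_lt h
  have hlead : emultiplicity π (-(2 * B ^ 3)) = (3 * n : ℕ) := by
    rw [emultiplicity_neg, emultiplicity_mul hπ, emultiplicity_eq_zero.mpr h2,
      emultiplicity_pow hπ, hn, zero_add]
    norm_cast
  have hrest : π ^ (3 * n + 1) ∣ A * (2 * A ^ 2 + 3 * A * B - 3 * B ^ 2) := by
    obtain ⟨A', rfl⟩ := hA
    obtain ⟨B', rfl⟩ := hB
    exact Dvd.intro (A' * (2 * π ^ 2 * A' ^ 2 + 3 * π * A' * B' - 3 * B' ^ 2)) (by ring)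
  have hgt : emultiplicity π (-(2 * B ^ 3)) <
      emultiplicity π (A * (2 * A ^ 2 + 3 * A * B - 3 * B ^ 2)) := by
    rw [hlead]
    exact (ENat.natCast_lt_natCast.mpr (3 * n).lt_succ_self).trans_le (le_emultiplicity_of_pow_dvd hrest)
  rw [show 2 * A ^ 3 + 3 * A ^ 2 * B - 3 * A * B ^ 2 - 2 * B ^ 3 =
      A * (2 * A ^ 2 + 3 * A * B - 3 * B ^ 2) + -(2 * B ^ 3) by ring,
    emultiplicity_add_of_gt hgt, hlead, hn]
  norm_cast

theorem emultiplicity_sq_add_trace_mul_add_sq (hπ : Prime π) {u u' x y : R} (hu : u * u' = 1)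
    (hx : ¬π ∣ x) (h : emultiplicity π ((1 - u) * (1 - u')) < emultiplicity π (x + y)) :
    emultiplicity π (x ^ 2 + (u + u') * x * y + y ^ 2) =
      emultiplicity π ((1 - u) * (1 - u')) := by
  have hlead : emultiplicity π (x ^ 2 * ((1 - u) * (1 - u'))) =
      emultiplicity π ((1 - u) * (1 - u')) := by
    rw [emultiplicity_mul hπ, emultiplicity_pow hπ, emultiplicity_eq_zero.mpr hx, mul_zero,
      zero_add]
  have hgt : emultiplicity π (x ^ 2 * ((1 - u) * (1 - u'))) <
      emultiplicity π ((x + y) * (y - x + (u + u') * x)) :=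
    hlead ▸ h.trans_le (emultiplicity_le_emultiplicity_of_dvd_right (dvd_mul_right _ _))
  rw [show x ^ 2 + (u + u') * x * y + y ^ 2 =
      (x + y) * (y - x + (u + u') * x) + x ^ 2 * ((1 - u) * (1 - u')) by
      linear_combination (-x ^ 2) * hu,
    emultiplicity_add_of_gt hgt, hlead]

end Ultrametric

theorem Prime.not_dvd_left_of_isCoprime_of_dvd_add {R : Type*} [CommRing R] {p a b : R}
    (hp : Prime p) (hab : IsCoprime a b) (h : p ∣ a + b) : ¬p ∣ a := fun ha =>
  hp.not_isUnit (hab.isUnit_of_dvd' ha ((dvd_add_right ha).mp h))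

theorem IsPrimitiveRoot.prime_one_sub_of_ringOfIntegers {r : ℕ} (hr : r.Prime) {K : Type*}
    [Field K] [CharZero K] [IsCyclotomicExtension {r} ℚ K] {ζ : 𝓞 K}
    (hζ : IsPrimitiveRoot ζ r) : Prime (1 - ζ) := by
  have : Fact r.Prime := ⟨hr⟩
  have hζK : IsPrimitiveRoot (ζ : K) r := hζ.map_of_injective RingOfIntegers.coe_injective
  have hζ_eq : hζK.toInteger = ζ := RingOfIntegers.ext rfl
  simpa only [neg_sub, hζ_eq] using hζK.zeta_sub_one_prime'.neg

section Cyclotomic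

variable {R : Type*} [CommRing R] {r : ℕ} {ζ : R}

theorem IsPrimitiveRoot.pow_mul_pow_sub (hζ : IsPrimitiveRoot ζ r) {k : ℕ} (hk : k ≤ r) :
    ζ ^ k * ζ ^ (r - k) = 1 := by
  rw [← pow_add, Nat.add_sub_cancel' hk, hζ.pow_eq_one]

variable [IsDomain R]

theorem IsPrimitiveRoot.associated_one_sub_one_sub_pow (hr : r.Prime) (hζ : IsPrimitiveRoot ζ r)
    {k : ℕ} (hk0 : 0 < k) (hkr : k < r) : Associated (1 - ζ) (1 - ζ ^ k) := by
  have hcop : k.Coprime r := (hr.coprime_iff_not_dvd.mpr (Nat.not_dvd_of_pos_of_lt hk0 hkr)).symm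
  simpa only [neg_sub] using (hζ.associated_sub_one_pow_sub_one_of_coprime hcop).neg_neg

theorem IsPrimitiveRoot.associated_one_sub_pow_pred_natCast (hr : r.Prime)
    (hζ : IsPrimitiveRoot ζ r) : Associated ((1 - ζ) ^ (r - 1)) (r : R) := by
  obtain ⟨t, rfl⟩ : ∃ t, r = t + 1 := ⟨r - 1, (Nat.sub_add_cancel hr.one_lt.le).symm⟩
  have hprod : ∏ k ∈ Finset.range t, (1 - ζ ^ (k + 1)) = ((t + 1 : ℕ) : R) := by
    rw [hζ.prod_one_sub_pow_eq_order]; push_cast; rfl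
  have hpow : (1 - ζ) ^ t = ∏ _k ∈ Finset.range t, (1 - ζ) := by
    rw [Finset.prod_const, Finset.card_range]
  rw [Nat.add_sub_cancel, hpow, ← hprod]
  exact Associated.prod _ _ _ fun (k : ℕ) hk =>
    hζ.associated_one_sub_one_sub_pow hr k.succ_pos (Nat.succ_lt_succ (Finset.mem_range.mp hk))

theorem IsPrimitiveRoot.emultiplicity_one_sub_pow (hr : r.Prime) (hζ : IsPrimitiveRoot ζ r)
    (hπ : Prime (1 - ζ)) {k : ℕ} (hk0 : 0 < k) (hkr : k < r) :
    emultiplicity (1 - ζ) (1 - ζ ^ k) = 1 := by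
  rw [← emultiplicity_eq_of_associated_right (hζ.associated_one_sub_one_sub_pow hr hk0 hkr)]
  simpa using emultiplicity_pow_self_of_prime hπ 1

theorem IsPrimitiveRoot.emultiplicity_natCast (hr : r.Prime) (hζ : IsPrimitiveRoot ζ r)
    (hπ : Prime (1 - ζ)) : emultiplicity (1 - ζ) (r : R) = (r - 1 : ℕ) := by
  rw [← emultiplicity_eq_of_associated_right (hζ.associated_one_sub_pow_pred_natCast hr),
    emultiplicity_pow_self_of_prime hπ]

theorem IsPrimitiveRoot.not_dvd_intCast (hr : r.Prime) (hζ : IsPrimitiveRoot ζ r)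
    (hπ : Prime (1 - ζ)) {c : ℤ} (hc : ¬(r : ℤ) ∣ c) : ¬(1 - ζ) ∣ (c : R) := by
  intro hdvd
  obtain ⟨u, v, huv⟩ := (Nat.prime_iff_prime_int.mp hr).coprime_iff_not_dvd.mpr hc
  have hr_dvd : (1 - ζ) ∣ (r : R) :=
    (dvd_pow_self _ (Nat.sub_ne_zero_of_lt hr.one_lt)).trans
      (hζ.associated_one_sub_pow_pred_natCast hr).dvd
  have hone : (1 - ζ) ∣ ((u * r + v * c : ℤ) : R) := by
    push_cast
    exact dvd_add (dvd_mul_of_dvd_right hr_dvd _) (dvd_mul_of_dvd_right hdvd _)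
  rw [huv, Int.cast_one] at hone
  exact hπ.not_isUnit (isUnit_of_dvd_one hone)

theorem IsPrimitiveRoot.emultiplicity_intCast (hr : r.Prime) (hζ : IsPrimitiveRoot ζ r)
    (hπ : Prime (1 - ζ)) (n : ℤ) :
    emultiplicity (1 - ζ) (n : R) = (r - 1 : ℕ) * emultiplicity (r : ℤ) n := by
  rcases eq_or_ne n 0 with rfl | hn
  · rw [Int.cast_zero, emultiplicity_zero, emultiplicity_zero, ENat.mul_top]
    exact_mod_cast Nat.sub_ne_zero_of_lt hr.one_lt
  have hfin : FiniteMultiplicity (r : ℤ) n :=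
    Int.finiteMultiplicity_iff.mpr ⟨by exact_mod_cast hr.ne_one, hn⟩
  obtain ⟨c, hc, hrc⟩ := hfin.exists_eq_pow_mul_and_not_dvd
  rw [hfin.emultiplicity_eq_multiplicity]
  generalize multiplicity (r : ℤ) n = k at hc ⊢
  rw [hc, Int.cast_mul, Int.cast_pow, Int.cast_natCast,
    emultiplicity_mul hπ, emultiplicity_pow hπ, hζ.emultiplicity_natCast hr hπ,
    emultiplicity_eq_zero.mpr (hζ.not_dvd_intCast hr hπ hrc), add_zero, mul_comm]

theorem IsPrimitiveRoot.le_emultiplicity_intCast_of_dvd (hr : r.Prime)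
    (hζ : IsPrimitiveRoot ζ r) {n : ℤ} (hn : (r : ℤ) ∣ n) :
    ((r - 1 : ℕ) : ℕ∞) ≤ emultiplicity (1 - ζ) (n : R) :=
  le_emultiplicity_of_pow_dvd <| (hζ.associated_one_sub_pow_pred_natCast hr).dvd.trans <| by
    exact_mod_cast Int.cast_dvd_cast _ _ hn

end Cyclotomic

section FreyCurve

variable {R : Type*} [CommRing R] [IsDomain R] {r : ℕ} {ζ : R}

theorem IsPrimitiveRoot.emultiplicity_one_sub_pow_mul_one_sub_pow_sub (hr : r.Prime)
    (hζ : IsPrimitiveRoot ζ r) (hπ : Prime (1 - ζ)) {k : ℕ} (hk0 : 0 < k) (hkr : k < r) :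
    emultiplicity (1 - ζ) ((1 - ζ ^ k) * (1 - ζ ^ (r - k))) = 2 := by
  rw [emultiplicity_mul hπ, hζ.emultiplicity_one_sub_pow hr hπ hk0 hkr,
    hζ.emultiplicity_one_sub_pow hr hπ (by omega) (by omega)]
  rfl

theorem IsPrimitiveRoot.emultiplicity_intCast_sq_add_mul_add_sq (hr : r.Prime) (hr3 : 3 < r)
    (hζ : IsPrimitiveRoot ζ r) (hπ : Prime (1 - ζ)) {k : ℕ} (hk0 : 0 < k) (hkr : k < r)
    {a b : ℤ} (ha : ¬(r : ℤ) ∣ a) (hab : (r : ℤ) ∣ a + b) :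
    emultiplicity (1 - ζ) ((a : R) ^ 2 + (ζ ^ k + ζ ^ (r - k)) * a * b + (b : R) ^ 2) = 2 := by
  have hsum : ((r - 1 : ℕ) : ℕ∞) ≤ emultiplicity (1 - ζ) ((a : R) + b) := by
    exact_mod_cast hζ.le_emultiplicity_intCast_of_dvd hr hab
  have hk := hζ.emultiplicity_one_sub_pow_mul_one_sub_pow_sub hr hπ hk0 hkr
  rw [emultiplicity_sq_add_trace_mul_add_sq hπ (hζ.pow_mul_pow_sub hkr.le)
    (hζ.not_dvd_intCast hr hπ ha) (hk ▸ lt_of_lt_of_le (by norm_cast; omega) hsum), hk]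

theorem emultiplicity_freyA (hr : r.Prime) (hr3 : 3 < r) (hζ : IsPrimitiveRoot ζ r)
    (hπ : Prime (1 - ζ)) (a b : ℤ) :
    emultiplicity (1 - ζ) (freyA r ζ a b) = 2 + 2 * emultiplicity (1 - ζ) ((a : R) + b) := by
  have hζ_unit : ¬(1 - ζ) ∣ ζ := fun h =>
    hπ.not_isUnit (isUnit_of_dvd_unit h (hζ.isUnit hr.ne_zero))
  have hself : emultiplicity (1 - ζ) (1 - ζ) = 1 := by
    simpa using emultiplicity_pow_self_of_prime hπ 1
  rw [freyA, freyAlpha, emultiplicity_mul hπ, emultiplicity_mul hπ, emultiplicity_mul hπ,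
    emultiplicity_eq_zero.mpr hζ_unit, hself,
    hζ.emultiplicity_one_sub_pow hr hπ (by omega) (by omega), emultiplicity_pow hπ]
  norm_num

theorem emultiplicity_freyB (hr : r.Prime) (hr3 : 3 < r) (hζ : IsPrimitiveRoot ζ r)
    (hπ : Prime (1 - ζ)) {a b : ℤ} (ha : ¬(r : ℤ) ∣ a) (hab : (r : ℤ) ∣ a + b) :
    emultiplicity (1 - ζ) (freyB r ζ a b) = 4 := by
  have hβ : emultiplicity (1 - ζ) (freyBeta r ζ) = 2 := by
    simpa only [freyBeta, pow_one] using
      hζ.emultiplicity_one_sub_pow_mul_one_sub_pow_sub hr hπ one_pos hr.one_lt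
  rw [freyB, emultiplicity_mul hπ, hβ,
    hζ.emultiplicity_intCast_sq_add_mul_add_sq hr hr3 hπ two_pos (by omega) ha hab]
  rfl

theorem emultiplicity_freyC (hr : r.Prime) (hr3 : 3 < r) (hζ : IsPrimitiveRoot ζ r)
    (hπ : Prime (1 - ζ)) {a b : ℤ} (ha : ¬(r : ℤ) ∣ a) (hab : (r : ℤ) ∣ a + b) :
    emultiplicity (1 - ζ) (freyC r ζ a b) = 4 := by
  have hf : emultiplicity (1 - ζ)
      ((a : R) ^ 2 + (ζ + ζ ^ (r - 1)) * a * b + (b : R) ^ 2) = 2 := by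
    simpa only [pow_one] using
      hζ.emultiplicity_intCast_sq_add_mul_add_sq hr hr3 hπ one_pos hr.one_lt ha hab
  rw [freyC, freyGamma, emultiplicity_mul hπ, emultiplicity_neg,
    hζ.emultiplicity_one_sub_pow_mul_one_sub_pow_sub hr hπ two_pos (by omega), hf]
  rfl

theorem emultiplicity_freyB_lt_freyA (hr : r.Prime) (hr3 : 3 < r) (hζ : IsPrimitiveRoot ζ r)
    (hπ : Prime (1 - ζ)) {a b : ℤ} (ha : ¬(r : ℤ) ∣ a) (hab : (r : ℤ) ∣ a + b) :
    emultiplicity (1 - ζ) (freyB r ζ a b) < emultiplicity (1 - ζ) (freyA r ζ a b) := by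
  have hsum : ((r - 1 : ℕ) : ℕ∞) ≤ emultiplicity (1 - ζ) ((a : R) + b) := by
    exact_mod_cast hζ.le_emultiplicity_intCast_of_dvd hr hab
  rw [emultiplicity_freyA hr hr3 hζ hπ, emultiplicity_freyB hr hr3 hζ hπ ha hab]
  calc (4 : ℕ∞) < 2 + 2 * ((r - 1 : ℕ) : ℕ∞) := by norm_cast; omega
    _ ≤ _ := by gcongr

end FreyCurve

/-- Let `r ≥ 5` be a prime, `ζ` a primitive `r`-th root of unity in the ring of
integers `ℤ[ζ]` of `ℚ(ζ_r)`, and `λ = (1−ζ)` the prime above `r`, with valuation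
`v_λ` normalized by `v_λ(1−ζ) = 1`. Let `a, b` be coprime integers with `r ∣ a+b`.
Then `v_λ(c₄) = 8`, `v_λ(c₆) = 12` and `v_λ(Δ) = 20 + 4(r−1)·v_r(a+b)` for the Frey
curve `Y² = X(X − A_{a,b})(X + B_{a,b})`. -/
theorem stmt_13 (r : ℕ) (hr : r.Prime) (hr5 : 5 ≤ r)
    (K : Type*) [Field K] [CharZero K]
    [IsCyclotomicExtension {r} ℚ K]
    (ζ : 𝓞 K) (hζ : IsPrimitiveRoot ζ r)
    (a b : ℤ) (hab : IsCoprime a b) (hrab : (r : ℤ) ∣ a + b) :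
    emultiplicity (1 - ζ) (freyC4 r ζ a b) = 8 ∧
    emultiplicity (1 - ζ) (freyC6 r ζ a b) = 12 ∧
    emultiplicity (1 - ζ) (freyDelta r ζ a b) =
      20 + ((4 * (r - 1) : ℕ) : ℕ∞) * emultiplicity (r : ℤ) (a + b) := by
  have hr3 : 3 < r := by omega
  have hπ := hζ.prime_one_sub_of_ringOfIntegers hr
  have ha := (Nat.prime_iff_prime_int.mp hr).not_dvd_left_of_isCoprime_of_dvd_add hab hrab
  have h2 : ¬(1 - ζ) ∣ (2 : 𝓞 K) := by
    simpa using hζ.not_dvd_intCast hr hπ (c := 2) fun h => by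
      have := Int.le_of_dvd two_pos h; omega
  have hsum : emultiplicity (1 - ζ) ((a : 𝓞 K) + b) =
      (r - 1 : ℕ) * emultiplicity (r : ℤ) (a + b) := by
    exact_mod_cast hζ.emultiplicity_intCast hr hπ (a + b)
  have hBA := emultiplicity_freyB_lt_freyA hr hr3 hζ hπ ha hrab
  have hB := emultiplicity_freyB hr hr3 hζ hπ ha hrab
  refine ⟨?_, ?_, ?_⟩
  · rw [freyC4, emultiplicity_mul hπ, emultiplicity_pow hπ, emultiplicity_eq_zero.mpr h2,
      emultiplicity_sq_add_mul_add_sq_of_lt hπ hBA, hB]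
    norm_num
  · rw [freyC6, emultiplicity_mul hπ, emultiplicity_pow hπ, emultiplicity_eq_zero.mpr h2,
      emultiplicity_cubic_of_lt hπ h2 hBA, hB]
    norm_num
  · rw [freyDelta, emultiplicity_mul hπ, emultiplicity_pow hπ, emultiplicity_pow hπ,
      emultiplicity_eq_zero.mpr h2, emultiplicity_mul hπ, emultiplicity_mul hπ,
      emultiplicity_freyA hr hr3 hζ hπ, hB, emultiplicity_freyC hr hr3 hζ hπ ha hrab, hsum]
    push_cast
    ring
end

section
/- Let n₁, …, n_k be finitely many negative integers. Then there exist infinitely many primes p such that none of n₁, …, n_k is a square modulo p; in fact one may take the primes p ≡ 7 (mod 8) satisfying (q/p) = 1 for every odd prime q dividing the product n₁⋯n_k. -/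
/-!
Let `N = n₁ ⋯ n_k`. For a prime `p ≡ 7 (mod 8)`, `-1` is a non-square and `2` is a square
mod `p`; if moreover every odd prime factor of `N` is a nonzero square mod `p`, then so is
`|nᵢ|`, hence `nᵢ = -|nᵢ|` is a non-square. By Dirichlet there are infinitely many primes
`p ≡ -1 (mod 8|N|)`, and for each odd prime `q ∣ N` quadratic reciprocity (with `p ≡ 3 (mod 4)`
and `p ≡ -1 (mod q)`) gives `(q/p) = 1`.
-/

theorem isSquare_natCast_of_forall_prime_dvd {R : Type*} [CommSemiring R] (m : ℕ)
    (h : ∀ r : ℕ, r.Prime → r ∣ m → IsSquare (r : R)) : IsSquare (m : R) := by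
  induction m using induction_on_primes with
  | zero => simp
  | one => simp
  | prime_mul r a hr ih =>
    rw [Nat.cast_mul]
    exact (h r hr (dvd_mul_right r a)).mul
      (ih fun s hs hsa => h s hs (hsa.mul_left r))

theorem not_isSquare_neg_of_isSquare {K : Type*} [Field K] {a : K} (ha : IsSquare a)
    (ha0 : a ≠ 0) (h1 : ¬IsSquare (-1 : K)) : ¬IsSquare (-a) := fun h => by
  apply h1
  simpa [neg_div, div_self ha0] using h.div ha

theorem ZMod.isSquare_natCast_of_natCast_eq_neg_one {p q : ℕ} [Fact p.Prime] [Fact q.Prime]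
    (hp : p % 4 = 3) (hq : q ≠ 2) (hpq : (p : ZMod q) = -1) : IsSquare (q : ZMod p) := by
  have hpq' : p ≠ q := by
    rintro rfl
    simp at hpq
  have hq_odd : q % 2 = 1 := (Nat.Prime.mod_two_eq_one_iff_ne_two Fact.out).mpr hq
  rcases (by omega : q % 4 = 1 ∨ q % 4 = 3) with hq4 | hq4
  · rw [← ZMod.exists_sq_eq_prime_iff_of_mod_four_eq_one hq4 (by omega), hpq,
      ZMod.exists_sq_eq_neg_one_iff]
    omega
  · rw [ZMod.exists_sq_eq_prime_iff_of_mod_four_eq_three hp hq4 hpq', hpq,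
      ZMod.exists_sq_eq_neg_one_iff]
    omega

def sevenModEightResiduePrimes (N : ℤ) : Set ℕ :=
  {p : ℕ | p.Prime ∧ p % 8 = 7 ∧
    ∀ q : ℕ, q.Prime → Odd q → (q : ℤ) ∣ N → (q : ZMod p) ≠ 0 ∧ IsSquare ((q : ℕ) : ZMod p)}

namespace sevenModEightResiduePrimes

variable {N : ℤ} {p : ℕ}

theorem natCast_ne_zero_and_isSquare (hp : p ∈ sevenModEightResiduePrimes N) {m : ℕ}
    (hm : (m : ℤ) ∣ N) : (m : ZMod p) ≠ 0 ∧ IsSquare (m : ZMod p) := by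
  obtain ⟨hp, hp8, hq⟩ := hp
  have : Fact p.Prime := ⟨hp⟩
  have hp_odd : Odd p := hp.odd_of_ne_two (by omega)
  refine ⟨fun hpm => ?_, isSquare_natCast_of_forall_prime_dvd m fun r hr hrm => ?_⟩
  · -- `p` itself cannot divide `N`, since `(p : ZMod p) = 0`.
    rw [ZMod.natCast_eq_zero_iff] at hpm
    exact (hq p hp hp_odd ((Int.natCast_dvd_natCast.mpr hpm).trans hm)).1 (by simp)
  · rcases hr.eq_two_or_odd' with rfl | hr_odd
    · exact (ZMod.exists_sq_eq_two_iff (by omega)).mpr (Or.inr hp8)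
    · exact (hq r hr hr_odd ((Int.natCast_dvd_natCast.mpr hrm).trans hm)).2

theorem not_isSquare_intCast (hp : p ∈ sevenModEightResiduePrimes N) {a : ℤ} (ha : a < 0)
    (haN : a ∣ N) : ¬IsSquare (a : ZMod p) := by
  have : Fact p.Prime := ⟨hp.1⟩
  obtain ⟨hne, hsq⟩ := natCast_ne_zero_and_isSquare hp (m := a.natAbs) (by simpa using haN)
  have ha' : a = -(a.natAbs : ℤ) := by omega
  rw [ha', Int.cast_neg, Int.cast_natCast]
  exact not_isSquare_neg_of_isSquare hsq hne
    (by rw [ZMod.exists_sq_eq_neg_one_iff]; have := hp.2.1; omega)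

theorem mem_of_natCast_eq_neg_one (hp : p.Prime) (hpN : (p : ZMod (8 * N.natAbs)) = -1) :
    p ∈ sevenModEightResiduePrimes N := by
  have hdvd : 8 * N.natAbs ∣ p + 1 := by
    rw [← ZMod.natCast_eq_zero_iff]
    push_cast [hpN]
    ring
  have hp8 : p % 8 = 7 := by
    have := hp.two_le
    have := (Dvd.intro _ rfl).trans hdvd
    omega
  refine ⟨hp, hp8, fun q hq hq_odd hqN => ?_⟩
  have : Fact p.Prime := ⟨hp⟩
  have : Fact q.Prime := ⟨hq⟩
  have hpq : (p : ZMod q) = -1 := by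
    have hqp : q ∣ p + 1 := (Int.natCast_dvd.mp hqN).trans ((Dvd.intro_left _ rfl).trans hdvd)
    rw [← ZMod.natCast_eq_zero_iff] at hqp
    push_cast at hqp
    exact eq_neg_of_add_eq_zero_left hqp
  refine ⟨fun h0 => ?_, ZMod.isSquare_natCast_of_natCast_eq_neg_one (by omega)
    (by rintro rfl; exact (by decide : ¬Odd 2) hq_odd) hpq⟩
  rw [ZMod.natCast_eq_zero_iff, Nat.prime_dvd_prime_iff_eq hp hq] at h0
  subst h0
  simp at hpq

theorem infinite (hN : N ≠ 0) : (sevenModEightResiduePrimes N).Infinite := by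
  have : NeZero (8 * N.natAbs) := ⟨by positivity⟩
  exact (Nat.infinite_setOfPred_prime_and_eq_mod isUnit_one.neg).mono
    fun _ hp => mem_of_natCast_eq_neg_one hp.1 hp.2

end sevenModEightResiduePrimes

/-- Let `n₁, …, n_k` be finitely many negative integers. Then there exist infinitely
many primes `p` such that none of the `nᵢ` is a square modulo `p`; in fact one may take
the primes `p ≡ 7 (mod 8)` such that `(q/p) = 1` for every odd prime `q` dividing
`n₁ ⋯ n_k`. -/
theorem stmt_17 (k : ℕ) (n : Fin k → ℤ) (hn : ∀ i, n i < 0) :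
    {p : ℕ | p.Prime ∧ p % 8 = 7 ∧
        ∀ q : ℕ, q.Prime → Odd q → (q : ℤ) ∣ (∏ i, n i) →
          (q : ZMod p) ≠ 0 ∧ IsSquare ((q : ℕ) : ZMod p)}.Infinite ∧
    {p : ℕ | p.Prime ∧ p % 8 = 7 ∧
        ∀ q : ℕ, q.Prime → Odd q → (q : ℤ) ∣ (∏ i, n i) →
          (q : ZMod p) ≠ 0 ∧ IsSquare ((q : ℕ) : ZMod p)} ⊆
      {p : ℕ | p.Prime ∧ ∀ i, ¬ IsSquare ((n i : ZMod p))} := by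
  have hN : ∏ i, n i ≠ 0 := Finset.prod_ne_zero_iff.mpr fun i _ => (hn i).ne
  refine ⟨sevenModEightResiduePrimes.infinite hN, fun p hp => ⟨hp.1, fun i => ?_⟩⟩
  exact sevenModEightResiduePrimes.not_isSquare_intCast hp (hn i)
    (Finset.dvd_prod_of_mem n (Finset.mem_univ i))
end
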